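/- Two ¬-free nested programs are strongly equivalent if and only if they have the same positive SE-models, i.e., the same SE-models (X,Y) in which X and Y consist only of atoms. -/

import Mathlib

open scoped Classical

inductive Lit where
  | pos : ℕ → Lit
  | neg : ℕ → Lit
deriving DecidableEq

inductive Fml where
  | bot : Fml
  | top : Fml
  | lit : Lit → Fml
  | not : Fml → Fml
  | conj : Fml → Fml → Fml
  | disj : Fml → Fml → Fml
deriving DecidableEq

structure Rule where
  head : Fml
  body : Fml
deriving DecidableEq

abbrev Prog := Set Rule

/-- A set of literals is consistent if it contains no complementary pair. -/
def Consistent (X : Set Lit) : Prop :=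
  ∀ a : ℕ, ¬ (Lit.pos a ∈ X ∧ Lit.neg a ∈ X)

def Sat (X : Set Lit) : Fml → Prop
  | Fml.bot => False
  | Fml.top => True
  | Fml.lit l => l ∈ X
  | Fml.not F => ¬ Sat X F
  | Fml.conj F G => Sat X F ∧ Sat X G
  | Fml.disj F G => Sat X F ∨ Sat X G

def SatRule (X : Set Lit) (r : Rule) : Prop := Sat X r.body → Sat X r.head

def SatProg (X : Set Lit) (P : Prog) : Prop := ∀ r ∈ P, SatRule X r

/-- The reduct of a formula relative to X. -/
noncomputable def Reduct (X : Set Lit) : Fml → Fml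
  | Fml.bot => Fml.bot
  | Fml.top => Fml.top
  | Fml.lit l => Fml.lit l
  | Fml.not F => if Sat X F then Fml.bot else Fml.top
  | Fml.conj F G => Fml.conj (Reduct X F) (Reduct X G)
  | Fml.disj F G => Fml.disj (Reduct X F) (Reduct X G)

noncomputable def ReductRule (X : Set Lit) (r : Rule) : Rule :=
  ⟨Reduct X r.head, Reduct X r.body⟩

noncomputable def ReductProg (X : Set Lit) (P : Prog) : Prog :=
  ReductRule X '' P

/-- Y is an answer set for P: Y is minimal among consistent sets satisfying the reduct of P w.r.t. Y. -/
def AnswerSet (Y : Set Lit) (P : Prog) : Prop :=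
  Consistent Y ∧ SatProg Y (ReductProg Y P) ∧
    ∀ Z : Set Lit, Consistent Z → SatProg Z (ReductProg Y P) → Z ⊆ Y → Z = Y

def SEModel (P : Prog) (X Y : Set Lit) : Prop :=
  Consistent X ∧ Consistent Y ∧ X ⊆ Y ∧ SatProg Y P ∧ SatProg X (ReductProg Y P)

def StrongEq (P Q : Prog) : Prop :=
  ∀ R : Prog, ∀ Y : Set Lit, AnswerSet Y (P ∪ R) ↔ AnswerSet Y (Q ∪ R)

def Fml.negFree : Fml → Prop
  | Fml.bot => True
  | Fml.top => True
  | Fml.lit l => ∃ a, l = Lit.pos a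
  | Fml.not F => F.negFree
  | Fml.conj F G => F.negFree ∧ G.negFree
  | Fml.disj F G => F.negFree ∧ G.negFree

def ProgNegFree (P : Prog) : Prop := ∀ r ∈ P, r.head.negFree ∧ r.body.negFree

/-- The set of atoms (positive literals) in a set of literals. -/
def PosLits (Z : Set Lit) : Set Lit := {l ∈ Z | ∃ a, l = Lit.pos a}

def AtomsOnly (Z : Set Lit) : Prop := ∀ l ∈ Z, ∃ a, l = Lit.pos a

/-! SE-models characterize strong equivalence. If `P` and `Q` are strongly equivalent and
`Y ⊨ P`, adding the facts `X` and the rules `p ← q` for `p, q ∈ Y \ X` leaves `X` and `Y` as the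
only candidate models of the reduct between `X` and `Y`, so `Y` becomes an answer set exactly
when `X = Y` or `(X, Y)` is not an SE-model; hence both programs have the same SE-models.
Conversely, the answer sets of `P ∪ R` are determined by the SE-models of `P`. For a ¬-free
program, satisfaction and reducts only see the atoms of an interpretation, so a pair of
consistent sets `X ⊆ Y` is an SE-model iff the pair of their atoms is one. -/

lemma sat_reduct_self (Y : Set Lit) (F : Fml) : Sat Y (Reduct Y F) ↔ Sat Y F := by
  induction F with
  | not F _ => by_cases h : Sat Y F <;> simp [Sat, Reduct, h]
  | conj F G ihF ihG => simp [Sat, Reduct, ihF, ihG]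
  | disj F G ihF ihG => simp [Sat, Reduct, ihF, ihG]
  | _ => simp [Sat, Reduct]

lemma satProg_reductProg_self (Y : Set Lit) (P : Prog) :
    SatProg Y (ReductProg Y P) ↔ SatProg Y P := by
  simp only [SatProg, ReductProg, Set.forall_mem_image, SatRule, ReductRule, sat_reduct_self]

lemma reductProg_union (Y : Set Lit) (P R : Prog) :
    ReductProg Y (P ∪ R) = ReductProg Y P ∪ ReductProg Y R :=
  Set.image_union _ _ _

lemma satProg_union {Z : Set Lit} {P R : Prog} :
    SatProg Z (P ∪ R) ↔ SatProg Z P ∧ SatProg Z R :=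
  forall₂_or_left

lemma seModel_self_iff {P : Prog} {Y : Set Lit} :
    SEModel P Y Y ↔ Consistent Y ∧ SatProg Y P := by
  simp only [SEModel, satProg_reductProg_self, subset_rfl]
  tauto

lemma SEModel.self {P : Prog} {X Y : Set Lit} (h : SEModel P X Y) : SEModel P Y Y :=
  seModel_self_iff.2 ⟨h.2.1, h.2.2.2.1⟩

lemma answerSet_union_iff {P R : Prog} {Y : Set Lit} :
    AnswerSet Y (P ∪ R) ↔ SEModel P Y Y ∧ SatProg Y R ∧
      ∀ Z, SEModel P Z Y → SatProg Z (ReductProg Y R) → Z = Y := by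
  simp only [AnswerSet, seModel_self_iff, reductProg_union, satProg_union,
    satProg_reductProg_self]
  constructor
  · rintro ⟨hY, ⟨hYP, hYR⟩, hmin⟩
    exact ⟨⟨hY, hYP⟩, hYR, fun Z ⟨hZ, _, hZY, _, hZP⟩ hZR => hmin Z hZ ⟨hZP, hZR⟩ hZY⟩
  · rintro ⟨⟨hY, hYP⟩, hYR, hmin⟩
    exact ⟨hY, ⟨hYP, hYR⟩, fun Z hZ ⟨hZP, hZR⟩ hZY => hmin Z ⟨hZ, hY, hZY, hYP, hZP⟩ hZR⟩

lemma strongEq_of_seModel_iff {P Q : Prog}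
    (h : ∀ X Y, SEModel P X Y ↔ SEModel Q X Y) : StrongEq P Q := by
  intro R Y
  simp only [answerSet_union_iff, h]

def Facts (X : Set Lit) : Prog := (fun l => ⟨Fml.lit l, Fml.top⟩) '' X

def Pairs (S : Set Lit) : Prog := (fun pq => ⟨Fml.lit pq.1, Fml.lit pq.2⟩) '' S ×ˢ S

lemma reductProg_facts (Y X : Set Lit) : ReductProg Y (Facts X) = Facts X :=
  Set.image_image _ _ _

lemma reductProg_pairs (Y S : Set Lit) : ReductProg Y (Pairs S) = Pairs S :=
  Set.image_image _ _ _

lemma satProg_facts {Z X : Set Lit} : SatProg Z (Facts X) ↔ X ⊆ Z := by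
  simp [SatProg, Facts, SatRule, Sat, Set.subset_def]

lemma satProg_pairs {Z S : Set Lit} :
    SatProg Z (Pairs S) ↔ ∀ p ∈ S, ∀ q ∈ S, q ∈ Z → p ∈ Z := by
  simp only [SatProg, Pairs, Set.forall_mem_image, Set.forall_prod_set, SatRule, Sat]

lemma eq_or_eq_of_satProg_pairs {X Y Z : Set Lit} (hXZ : X ⊆ Z) (hZY : Z ⊆ Y)
    (hZ : SatProg Z (Pairs (Y \ X))) : Z = X ∨ Z = Y := by
  by_contra! ⟨hZX, hZY'⟩
  obtain ⟨q, hqZ, hqX⟩ := Set.exists_of_ssubset (hXZ.ssubset_of_ne hZX.symm)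
  obtain ⟨p, hpY, hpZ⟩ := Set.exists_of_ssubset (hZY.ssubset_of_ne hZY')
  exact hpZ (satProg_pairs.1 hZ p ⟨hpY, fun hpX => hpZ (hXZ hpX)⟩ q ⟨hZY hqZ, hqX⟩ hqZ)

lemma answerSet_union_facts_pairs_iff {P : Prog} {X Y : Set Lit} (hXY : X ⊆ Y) :
    AnswerSet Y (P ∪ (Facts X ∪ Pairs (Y \ X))) ↔ SEModel P Y Y ∧ (SEModel P X Y → X = Y) := by
  have hR : ∀ Z, SatProg Z (Facts X ∪ Pairs (Y \ X)) ↔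
      X ⊆ Z ∧ ∀ p ∈ Y \ X, ∀ q ∈ Y \ X, q ∈ Z → p ∈ Z := fun Z => by
    rw [satProg_union, satProg_facts, satProg_pairs]
  simp only [answerSet_union_iff, reductProg_union, reductProg_facts, reductProg_pairs]
  refine and_congr_right fun hY => ?_
  constructor
  · rintro ⟨-, hmin⟩ hXYse
    exact hmin X hXYse ((hR X).2 ⟨subset_rfl, fun _ _ _ hq hqX => absurd hqX hq.2⟩)
  · intro hXeq
    refine ⟨(hR Y).2 ⟨hXY, fun _ hp _ _ _ => hp.1⟩, fun Z hZ hZR => ?_⟩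
    rcases eq_or_eq_of_satProg_pairs ((hR Z).1 hZR).1 hZ.2.2.1 (satProg_union.1 hZR).2 with
      rfl | rfl
    · exact hXeq hZ
    · rfl

lemma seModel_self_of_strongEq {P Q : Prog} (h : StrongEq P Q) {Y : Set Lit}
    (hY : SEModel P Y Y) : SEModel Q Y Y := by
  have := h (Facts Y ∪ Pairs (Y \ Y)) Y
  rw [answerSet_union_facts_pairs_iff subset_rfl,
    answerSet_union_facts_pairs_iff subset_rfl] at this
  exact (this.1 ⟨hY, fun _ => rfl⟩).1

lemma seModel_of_strongEq {P Q : Prog} (h : StrongEq P Q) {X Y : Set Lit}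
    (hXY : SEModel P X Y) : SEModel Q X Y := by
  have hYQ := seModel_self_of_strongEq h hXY.self
  by_contra hXYQ
  have := h (Facts X ∪ Pairs (Y \ X)) Y
  rw [answerSet_union_facts_pairs_iff hXY.2.2.1,
    answerSet_union_facts_pairs_iff hXY.2.2.1] at this
  obtain rfl := (this.2 ⟨hYQ, fun h => absurd h hXYQ⟩).2 hXY
  exact hXYQ hYQ

lemma consistent_posLits (Z : Set Lit) : Consistent (PosLits Z) := by
  rintro a ⟨-, -, b, hb⟩
  exact Lit.noConfusion hb

lemma atomsOnly_posLits (Z : Set Lit) : AtomsOnly (PosLits Z) := fun _ hl => hl.2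

lemma posLits_mono {X Y : Set Lit} (h : X ⊆ Y) : PosLits X ⊆ PosLits Y :=
  fun _ hl => ⟨h hl.1, hl.2⟩

lemma sat_posLits {Z : Set Lit} {F : Fml} (hF : F.negFree) : Sat (PosLits Z) F ↔ Sat Z F := by
  induction F with
  | lit l =>
    obtain ⟨a, rfl⟩ := hF
    exact ⟨And.left, fun h => ⟨h, a, rfl⟩⟩
  | not F ih => exact not_congr (ih hF)
  | conj F G ihF ihG => exact and_congr (ihF hF.1) (ihG hF.2)
  | disj F G ihF ihG => exact or_congr (ihF hF.1) (ihG hF.2)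
  | _ => rfl

lemma reduct_posLits {Z : Set Lit} {F : Fml} (hF : F.negFree) :
    Reduct (PosLits Z) F = Reduct Z F := by
  induction F with
  | not F _ => simp only [Reduct, sat_posLits (show F.negFree from hF)]
  | conj F G ihF ihG => simp only [Reduct, ihF hF.1, ihG hF.2]
  | disj F G ihF ihG => simp only [Reduct, ihF hF.1, ihG hF.2]
  | _ => rfl

lemma negFree_reduct {Z : Set Lit} {F : Fml} (hF : F.negFree) : (Reduct Z F).negFree := by
  induction F with
  | lit l => exact hF
  | not F _ =>
    simp only [Reduct]
    split <;> trivial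
  | conj F G ihF ihG => exact ⟨ihF hF.1, ihG hF.2⟩
  | disj F G ihF ihG => exact ⟨ihF hF.1, ihG hF.2⟩
  | _ => trivial

lemma progNegFree_reductProg {Y : Set Lit} {P : Prog} (hP : ProgNegFree P) :
    ProgNegFree (ReductProg Y P) := by
  rintro r ⟨s, hs, rfl⟩
  exact ⟨negFree_reduct (hP s hs).1, negFree_reduct (hP s hs).2⟩

lemma satProg_posLits {Z : Set Lit} {P : Prog} (hP : ProgNegFree P) :
    SatProg (PosLits Z) P ↔ SatProg Z P :=
  forall₂_congr fun r hr => imp_congr (sat_posLits (hP r hr).2) (sat_posLits (hP r hr).1)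

lemma reductProg_posLits {Y : Set Lit} {P : Prog} (hP : ProgNegFree P) :
    ReductProg (PosLits Y) P = ReductProg Y P :=
  Set.image_congr fun r hr => by
    rw [ReductRule, ReductRule, reduct_posLits (hP r hr).1, reduct_posLits (hP r hr).2]

lemma seModel_iff_posLits {P : Prog} (hP : ProgNegFree P) {X Y : Set Lit} :
    SEModel P X Y ↔
      Consistent X ∧ Consistent Y ∧ X ⊆ Y ∧ SEModel P (PosLits X) (PosLits Y) := by
  simp only [SEModel, reductProg_posLits hP, satProg_posLits hP,
    satProg_posLits (progNegFree_reductProg hP), consistent_posLits, true_and]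
  exact ⟨fun ⟨hX, hY, hXY, h⟩ => ⟨hX, hY, hXY, posLits_mono hXY, h⟩,
    fun ⟨hX, hY, hXY, _, h⟩ => ⟨hX, hY, hXY, h⟩⟩

/-- ¬-free nested programs are strongly equivalent iff they have the
same positive SE-models. -/
theorem stmt7 (P Q : Prog) (hP : ProgNegFree P) (hQ : ProgNegFree Q) :
    StrongEq P Q ↔
      ∀ X Y : Set Lit, AtomsOnly X → AtomsOnly Y →
        (SEModel P X Y ↔ SEModel Q X Y) := by
  refine ⟨fun h X Y _ _ => ⟨seModel_of_strongEq h, seModel_of_strongEq fun R Y => (h R Y).symm⟩,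
    fun h => strongEq_of_seModel_iff fun X Y => ?_⟩
  rw [seModel_iff_posLits hP, seModel_iff_posLits hQ,
    h _ _ (atomsOnly_posLits X) (atomsOnly_posLits Y)]
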